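/- Let A and B be lists over a type α with decidable equality, and let x : α be a symbol that occurs in neither A nor B. Then for every natural number m, lcsLen(List.replicate m x ++ A, List.replicate m x ++ B) = m + lcsLen(A, B). That is, prepending both strings with m copies of a fresh symbol x increases the longest common subsequence length by exactly m. -/

import Mathlib

/-- `lcsLen s t` is the maximum length of a list that is a sublist
(subsequence) of both `s` and `t`. -/
def lcsLen {α : Type*} [DecidableEq α] (s t : List α) : ℕ :=
  ((s.sublists.filter (fun l => decide (l.Sublist t))).map List.length).foldr max 0

/-!
Since `x` is fresh, every occurrence of `x` in a common subsequence `l` of `xᵐ ++ A` and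
`xᵐ ++ B` comes from the prefix `xᵐ`, in both embeddings. So `l = xᵏ ++ l'` with
`k = count x l ≤ m`, and the same `l'` is a common subsequence of `A` and `B`; thus
`|l| ≤ m + lcsLen A B`. Conversely, `xᵐ` followed by a longest common subsequence of `A` and `B`
is a common subsequence of length `m + lcsLen A B`.
-/

section

open List

variable {α : Type*} [DecidableEq α]

theorem le_lcsLen {s t l : List α} (hs : l <+ s) (ht : l <+ t) : l.length ≤ lcsLen s t :=
  le_max_of_le (by simpa [mem_sublists] using ⟨l, ⟨hs, ht⟩, rfl⟩) le_rfl

theorem lcsLen_le {s t : List α} {n : ℕ} (h : ∀ l, l <+ s → l <+ t → l.length ≤ n) :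
    lcsLen s t ≤ n :=
  max_le_of_forall_le _ _ <| by
    simpa [mem_sublists] using fun _ l hs ht hl => hl ▸ h l hs ht

theorem exists_sublist_length_eq_lcsLen (s t : List α) :
    ∃ l, l <+ s ∧ l <+ t ∧ l.length = lcsLen s t := by
  have hne : ((s.sublists.filter (fun l => decide (l <+ t))).map length) ≠ [] := by
    simpa [filter_eq_nil_iff, mem_sublists] using ⟨[], nil_sublist s, nil_sublist t⟩
  simpa [lcsLen, mem_sublists, and_assoc] using maximum_mem (foldr_max_of_ne_nil hne).symm

theorem count_le_and_drop_count_sublist {l A : List α} {x : α} {m : ℕ}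
    (h : l <+ replicate m x ++ A) (hx : x ∉ A) :
    l.count x ≤ m ∧ l.drop (l.count x) <+ A := by
  obtain ⟨l₁, l₂, rfl, h₁, h₂⟩ := sublist_append_iff.1 h
  obtain ⟨k, hk, rfl⟩ := sublist_replicate_iff.1 h₁
  have hcount : (replicate k x ++ l₂).count x = k := by
    simp [count_eq_zero_of_not_mem fun hx₂ => hx (h₂.subset hx₂)]
  rw [hcount, drop_left' length_replicate]
  exact ⟨hk, h₂⟩

end

/-- Prepending both strings with `m` copies of a fresh symbol `x` increases
the LCS length by exactly `m`. -/
theorem lcsLen_replicate_prepend {α : Type*} [DecidableEq α]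
    (A B : List α) (x : α) (hxA : x ∉ A) (hxB : x ∉ B) (m : ℕ) :
    lcsLen (List.replicate m x ++ A) (List.replicate m x ++ B) =
      m + lcsLen A B := by
  apply le_antisymm
  · refine lcsLen_le fun l hA hB => ?_
    obtain ⟨hcount, hdropA⟩ := count_le_and_drop_count_sublist hA hxA
    have hdrop := le_lcsLen hdropA (count_le_and_drop_count_sublist hB hxB).2
    rw [List.length_drop] at hdrop
    have := List.count_le_length (a := x) (l := l)
    omega
  · obtain ⟨l, hA, hB, hl⟩ := exists_sublist_length_eq_lcsLen A B
    simpa [hl] using le_lcsLen (hA.append_left (List.replicate m x))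
      (hB.append_left (List.replicate m x))
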